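/- Define P(n,k)_q := (-1)^k q^{n(n-k)+k(k+1)/2} ∑_{s=0}^{⌊(n-k)/2⌋} q^{2s(s-n+k)} · qBinom(n; s, n-k-2s, k+s), where qBinom denotes the q-multinomial coefficient. Then P(n,k)_q is a polynomial in q of degree n² - k(k-1)/2 with leading coefficient (-1)^k. -/
import Mathlib

open Finset
open Polynomial

/-- The q-Pochhammer symbol `(q;q)_m`. -/
def qqPoch (q : ℚ) (m : ℕ) : ℚ := ∏ i ∈ range m, (1 - q ^ (i + 1))

lemma qqPoch_zero (q : ℚ) : qqPoch q 0 = 1 := by simp [qqPoch]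

lemma qqPoch_succ (q : ℚ) (m : ℕ) : qqPoch q (m+1) = qqPoch q m * (1 - q^(m+1)) := by
  simp [qqPoch, Finset.prod_range_succ]

lemma qqPoch_ne_zero {q : ℚ} {m n : ℕ} (hmn : m ≤ n)
    (hq : ∀ i, 1 ≤ i → i ≤ n → q ^ i ≠ 1) : qqPoch q m ≠ 0 := by
  unfold qqPoch
  refine Finset.prod_ne_zero_iff.2 fun i hi => ?_
  simp only [Finset.mem_range] at hi
  have h := hq (i+1) (by omega) (by omega)
  exact sub_ne_zero.2 fun h' => h h'.symm

/-- Gaussian binomial polynomial. -/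
noncomputable def G : ℕ → ℕ → Polynomial ℚ
  | _, 0 => 1
  | 0, _+1 => 0
  | n+1, k+1 => G n k + Polynomial.X ^ (k+1) * G n (k+1)
  termination_by n _ => n

lemma G_zero_right (n : ℕ) : G n 0 = 1 := by cases n <;> simp [G]

lemma G_zero_left (k : ℕ) : G 0 (k+1) = 0 := by simp [G]

lemma G_succ_succ (n k : ℕ) : G (n+1) (k+1) = G n k + Polynomial.X ^ (k+1) * G n (k+1) := by
  simp [G]

lemma G_eq_zero_of_lt : ∀ {n k : ℕ}, n < k → G n k = 0 := by
  intro n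
  induction n with
  | zero => intro k hk; match k, hk with | (k+1), _ => exact G_zero_left k
  | succ m ih =>
    intro k hk
    match k, hk with
    | (k+1), hk =>
      rw [G_succ_succ, ih (by omega), ih (by omega), mul_zero, add_zero]

lemma G_eval_mul {q : ℚ} : ∀ {n k : ℕ}, k ≤ n → (∀ i, 1 ≤ i → i ≤ n → q ^ i ≠ 1) →
    (G n k).eval q * (qqPoch q k * qqPoch q (n-k)) = qqPoch q n := by
  intro n
  induction n with
  | zero => intro k hk _; interval_cases k; simp [G_zero_right, qqPoch_zero]
  | succ m ih =>
    intro k hk hq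
    have hq' : ∀ i, 1 ≤ i → i ≤ m → q ^ i ≠ 1 := fun i h1 h2 => hq i h1 (by omega)
    match k with
    | 0 => simp [G_zero_right, qqPoch_zero]
    | (k+1) =>
      rw [G_succ_succ]
      rcases Nat.lt_or_ge m (k+1) with hlt | hge
      · -- k = m
        have hkm : k = m := by omega
        subst hkm
        have h0 : G k (k+1) = 0 := G_eq_zero_of_lt (by omega)
        have IH := ih (le_refl k) hq'
        simp only [Nat.sub_self, qqPoch_zero, mul_one] at IH
        have hne : qqPoch q k ≠ 0 := qqPoch_ne_zero (le_refl k) hq'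
        have he : (G k k).eval q = 1 := mul_right_cancel₀ hne (by rw [IH, one_mul])
        simp only [h0, eval_add, eval_mul, eval_pow, eval_X, eval_zero, mul_zero, add_zero,
          Nat.sub_self, qqPoch_zero, mul_one, he, one_mul]
      · -- k+1 ≤ m
        have IH1 := ih (k:=k) (by omega) hq'
        have IH2 := ih (k:=k+1) hge hq'
        set b := m - (k+1) with hb
        have hsub1 : m + 1 - (k+1) = b + 1 := by omega
        have hsub2 : m - k = b + 1 := by omega
        rw [hsub2, qqPoch_succ q b] at IH1
        rw [hsub1]
        simp only [eval_add, eval_mul, eval_pow, eval_X]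
        rw [qqPoch_succ q b, qqPoch_succ q k, qqPoch_succ q m]
        rw [qqPoch_succ q k] at IH2
        have hpow : q^(k+1) * q^(b+1) = q^(m+1) := by rw [← pow_add]; congr 1; omega
        linear_combination (1 - q^(k+1)) * IH1 + q^(k+1) * (1 - q^(b+1)) * IH2
          - qqPoch q m * hpow

lemma G_monic_natDegree : ∀ {n k : ℕ}, k ≤ n → (G n k).Monic ∧ (G n k).natDegree = k * (n - k) := by
  intro n
  induction n with
  | zero =>
    intro k hk; interval_cases k
    rw [G_zero_right]; exact ⟨monic_one, by simp⟩
  | succ m ih =>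
    intro k hk
    match k with
    | 0 => rw [G_zero_right]; exact ⟨monic_one, by simp⟩
    | k+1 =>
      rw [G_succ_succ]
      rcases Nat.lt_or_ge m (k+1) with hlt | hge
      · have hkm : k = m := by omega
        subst hkm
        have h0 : G k (k+1) = 0 := G_eq_zero_of_lt (by omega)
        rw [h0, mul_zero, add_zero]
        obtain ⟨h1, h2⟩ := ih (le_refl k)
        refine ⟨h1, ?_⟩
        simp only [Nat.sub_self, Nat.mul_zero] at h2 ⊢
        exact h2
      · obtain ⟨d, rfl⟩ : ∃ d, m = (k+1) + d := ⟨m - (k+1), by omega⟩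
        obtain ⟨h1, h2⟩ := ih (k := k) (by omega)
        obtain ⟨h3, h4⟩ := ih (k := k+1) hge
        have hm : (Polynomial.X ^ (k+1) * G (k+1+d) (k+1)).Monic := (monic_X_pow _).mul h3
        have hdeg : (Polynomial.X ^ (k+1) * G (k+1+d) (k+1)).natDegree = (k+1) + (k+1) * d := by
          rw [(monic_X_pow _).natDegree_mul h3, natDegree_X_pow, h4]
          congr 1; congr 1; omega
        have hlt2 : (G (k+1+d) k).natDegree < (Polynomial.X ^ (k+1) * G (k+1+d) (k+1)).natDegree := by
          rw [hdeg, h2]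
          have : k + 1 + d - k = d + 1 := by omega
          rw [this]
          nlinarith
        have hdlt : (G (k+1+d) k).degree < (Polynomial.X ^ (k+1) * G (k+1+d) (k+1)).degree :=
          Polynomial.degree_lt_degree hlt2
        refine ⟨hm.add_of_right hdlt, ?_⟩
        rw [Polynomial.natDegree_add_eq_right_of_natDegree_lt hlt2, hdeg]
        have : k + 1 + d + 1 - (k+1) = d + 1 := by omega
        rw [this]; ring


/-- The q-multinomial coefficient `qBinom(n; s, n-k-2s, k+s)` as a rational function of `q`. -/
def qTrinom (n k s : ℕ) (q : ℚ) : ℚ :=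
  qqPoch q n / (qqPoch q s * qqPoch q (n - k - 2 * s) * qqPoch q (k + s))

/-- The value `P(n,k)_q`. -/
def Pval (n k : ℕ) (q : ℚ) : ℚ :=
  (-1) ^ k * q ^ (n * (n - k) + k * (k + 1) / 2) *
    ∑ s ∈ range ((n - k) / 2 + 1),
      q ^ ((2 * s * (s - n + k) : ℤ)) * qTrinom n k s q

/-- the trinomial polynomial -/
noncomputable def T (n k s : ℕ) : Polynomial ℚ := G n s * G (n - s) (k + s)

lemma T_eval {q : ℚ} {n k s : ℕ} (h : k + 2*s ≤ n)
    (hq : ∀ i, 1 ≤ i → i ≤ n → q ^ i ≠ 1) :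
    (T n k s).eval q = qTrinom n k s q := by
  have hq' : ∀ i, 1 ≤ i → i ≤ n - s → q ^ i ≠ 1 := fun i h1 h2 => hq i h1 (by omega)
  have h1 := G_eval_mul (n := n) (k := s) (by omega) hq
  have h2 := G_eval_mul (n := n - s) (k := k + s) (by omega) hq'
  have hsub : n - s - (k + s) = n - k - 2*s := by omega
  rw [hsub] at h2
  have key : (T n k s).eval q *
      (qqPoch q s * qqPoch q (n - k - 2*s) * qqPoch q (k + s)) = qqPoch q n := by
    rw [T, eval_mul]
    linear_combination h1 + (G n s).eval q * qqPoch q s * h2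
  have hd : qqPoch q s * qqPoch q (n - k - 2*s) * qqPoch q (k + s) ≠ 0 :=
    mul_ne_zero (mul_ne_zero (qqPoch_ne_zero (m := s) (n := n) (by omega) hq)
      (qqPoch_ne_zero (m := n - k - 2*s) (n := n) (by omega) hq))
      (qqPoch_ne_zero (m := k + s) (n := n) (by omega) hq)
  rw [qTrinom, eq_div_iff hd]
  exact key

lemma T_monic_natDegree {n k s : ℕ} (h : k + 2*s ≤ n) :
    (T n k s).Monic ∧ (T n k s).natDegree = s * (n - s) + (k + s) * (n - k - 2*s) := by
  obtain ⟨m1, d1⟩ := G_monic_natDegree (n := n) (k := s) (by omega)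
  obtain ⟨m2, d2⟩ := G_monic_natDegree (n := n - s) (k := k + s) (by omega)
  have hsub : n - s - (k + s) = n - k - 2*s := by omega
  refine ⟨m1.mul m2, ?_⟩
  rw [T, m1.natDegree_mul m2, d1, d2, hsub]

lemma even_mul_pred (k : ℕ) : Even (k * (k-1)) := by
  rcases k with _ | c
  · simp
  · simpa [Nat.mul_comm] using Nat.even_mul_succ_self c

lemma cA_le {n k s : ℕ} (h : k + 2*s ≤ n) :
    2*s*(n-k-s) ≤ n*(n-k) + k*(k+1)/2 := by
  have h1 : 2*s ≤ n - k := by omega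
  have h2 : n - k - s ≤ n := by omega
  calc 2*s*(n-k-s) ≤ (n-k)*n := Nat.mul_le_mul h1 h2
    _ = n*(n-k) := Nat.mul_comm _ _
    _ ≤ _ := Nat.le_add_right _ _

lemma arith1 {n k : ℕ} (hk : k ≤ n) :
    (n*(n-k) + k*(k+1)/2) + k*(n-k) = n^2 - k*(k-1)/2 := by
  obtain ⟨d, rfl⟩ : ∃ d, n = k + d := ⟨n - k, by omega⟩
  simp only [Nat.add_sub_cancel_left] at *
  obtain ⟨a, ha⟩ := Nat.even_mul_succ_self k
  obtain ⟨b, hb⟩ := even_mul_pred k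
  have e1 : (k+d)^2 = k*k + 2*(k*d) + d*d := by ring
  have e2 : (k+d)*d = k*d + d*d := by ring
  have e3 : k*(k+1) = k*k + k := by ring
  have e4 : k*k = k*(k-1) + k := by
    rcases k with _ | c
    · simp
    · exact Nat.mul_succ (c+1) c
  have hha : k*(k+1)/2 = a := by rw [ha]; omega
  have hhb : k*(k-1)/2 = b := by rw [hb]; omega
  rw [hha, hhb]
  have hle : b ≤ (k+d)^2 := by nlinarith
  zify [hle]
  push_cast at *
  linarith

lemma arith2 {n k s : ℕ} (hk : k ≤ n) (hs : k + 2*s ≤ n) (hs1 : 1 ≤ s) :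
    ((n*(n-k) + k*(k+1)/2) - 2*s*(n-k-s)) + (s*(n-s) + (k+s)*(n-k-2*s))
      < n^2 - k*(k-1)/2 := by
  obtain ⟨d, rfl⟩ : ∃ d, n = k + 2*s + d := ⟨n - k - 2*s, by omega⟩
  have r1 : k + 2*s + d - k = 2*s + d := by omega
  have r2 : 2*s + d - s = s + d := by omega
  have r3 : k + 2*s + d - s = k + s + d := by omega
  have r4 : 2*s + d - 2*s = d := by omega
  rw [r1, r2, r3, r4]
  obtain ⟨a, ha⟩ := Nat.even_mul_succ_self k
  obtain ⟨b, hb⟩ := even_mul_pred k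
  have hha : k*(k+1)/2 = a := by rw [ha]; omega
  have hhb : k*(k-1)/2 = b := by rw [hb]; omega
  rw [hha, hhb]
  have e3 : k*(k+1) = k*k + k := by ring
  have e4 : k*k = k*(k-1) + k := by
    rcases k with _ | c
    · simp
    · exact Nat.mul_succ (c+1) c
  have hcA : 2*s*(s+d) ≤ (k+2*s+d)*(2*s+d) + a := by nlinarith
  have hbD : b ≤ (k+2*s+d)^2 := by nlinarith
  zify [hcA, hbD]
  push_cast at *
  nlinarith

lemma sum_monic_natDegree {M D : ℕ} {f : ℕ → Polynomial ℚ}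
    (h0 : (f 0).Monic) (hd0 : (f 0).natDegree = D)
    (hs : ∀ s, 1 ≤ s → s ≤ M → (f s).degree < (D : WithBot ℕ)) :
    (∑ s ∈ range (M+1), f s).Monic ∧ (∑ s ∈ range (M+1), f s).natDegree = D := by
  have hsplit : ∑ s ∈ range (M+1), f s = f 0 + ∑ s ∈ Ico 1 (M+1), f s := by
    rw [range_eq_Ico, Finset.sum_eq_sum_Ico_succ_bot (by omega) f]
  have hdrest : (∑ s ∈ Ico 1 (M+1), f s).degree < (D : WithBot ℕ) := by
    refine lt_of_le_of_lt (Polynomial.degree_sum_le _ _) ?_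
    rw [Finset.sup_lt_iff (by exact WithBot.bot_lt_coe D)]
    intro s hsmem
    simp only [Finset.mem_Ico] at hsmem
    exact hs s hsmem.1 (by omega)
  have hd0' : (f 0).degree = (D : WithBot ℕ) := by
    rw [Polynomial.degree_eq_natDegree h0.ne_zero, hd0]
  rw [hsplit]
  constructor
  · exact h0.add_of_left (hd0' ▸ hdrest)
  · have : (f 0 + ∑ s ∈ Ico 1 (M+1), f s).degree = (D : WithBot ℕ) := by
      rw [Polynomial.degree_add_eq_left_of_degree_lt (hd0' ▸ hdrest), hd0']
    exact Polynomial.natDegree_eq_of_degree_eq_some this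

/-- `P(n,k)_q` is a polynomial in `q` of degree `n² - k(k-1)/2` with leading
coefficient `(-1)^k`. -/
theorem Pval_is_polynomial (n k : ℕ) (hk : k ≤ n) :
    ∃ P : Polynomial ℚ,
      (∀ q : ℚ, q ≠ 0 → (∀ i, 1 ≤ i → i ≤ n → q ^ i ≠ 1) → P.eval q = Pval n k q) ∧
      P.natDegree = n ^ 2 - k * (k - 1) / 2 ∧
      P.leadingCoeff = (-1) ^ k := by
  set A := n * (n - k) + k * (k + 1) / 2 with hA
  set M := (n - k) / 2 with hM
  set f : ℕ → Polynomial ℚ := fun s => Polynomial.X ^ (A - 2*s*(n-k-s)) * T n k s with hf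
  have hrange : ∀ s, s ≤ M → k + 2*s ≤ n := fun s hs => by
    simp only [hM] at hs; omega
  -- monicity and degrees of f
  have hfm : ∀ s, s ≤ M → (f s).Monic ∧
      (f s).natDegree = (A - 2*s*(n-k-s)) + (s*(n-s) + (k+s)*(n-k-2*s)) := by
    intro s hs
    obtain ⟨tm, td⟩ := T_monic_natDegree (hrange s hs)
    exact ⟨(monic_X_pow _).mul tm, by rw [hf]; simp only
      [(monic_X_pow _).natDegree_mul tm, natDegree_X_pow, td]⟩
  obtain ⟨h0m, h0d⟩ := hfm 0 (Nat.zero_le _)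
  have hD0 : (f 0).natDegree = n^2 - k*(k-1)/2 := by
    rw [h0d]
    simp only [Nat.mul_zero, Nat.zero_mul, Nat.sub_zero, Nat.add_zero, Nat.zero_add,
      Nat.mul_one]
    exact arith1 hk
  have hlt : ∀ s, 1 ≤ s → s ≤ M → (f s).degree < ((n^2 - k*(k-1)/2 : ℕ) : WithBot ℕ) := by
    intro s h1 h2
    obtain ⟨hm, hd⟩ := hfm s h2
    rw [Polynomial.degree_eq_natDegree hm.ne_zero, hd]
    exact_mod_cast arith2 hk (hrange s h2) h1
  obtain ⟨hSm, hSd⟩ := sum_monic_natDegree h0m (hD0) hlt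
  refine ⟨Polynomial.C ((-1 : ℚ)^k) * ∑ s ∈ range (M+1), f s, ?_, ?_, ?_⟩
  · intro q hq0 hq
    rw [eval_mul, eval_C]
    rw [Polynomial.eval_finset_sum]
    rw [Pval]
    rw [← hA, ← hM]
    rw [mul_assoc]
    congr 1
    rw [Finset.mul_sum]
    refine Finset.sum_congr rfl fun s hsmem => ?_
    simp only [Finset.mem_range] at hsmem
    have hsM : s ≤ M := by omega
    have hkn := hrange s hsM
    have hcast : ((n - k - s : ℕ) : ℤ) = (n : ℤ) - k - s := by omega
    have hz : (2 * (s:ℤ) * ((s:ℤ) - n + k)) = -((2*s*(n-k-s) : ℕ) : ℤ) := by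
      push_cast [hcast]
      ring
    have hcA : 2*s*(n-k-s) ≤ A := cA_le hkn
    rw [hf]
    simp only [eval_mul, eval_pow, eval_X]
    rw [T_eval hkn hq, hz, zpow_neg, zpow_natCast, pow_sub₀ q hq0 hcA]
    ring
  · rw [Polynomial.natDegree_C_mul (pow_ne_zero k (by norm_num : (-1:ℚ) ≠ 0)), hSd]
  · rw [Polynomial.leadingCoeff_mul, Polynomial.leadingCoeff_C, hSm.leadingCoeff, mul_one]
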